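/- Let μ, ν, η be Borel probability measures on ℝ whose supports are bounded above. If μ ∗ η ≥₁ ν ∗ η, then sup(supp μ) ≥ sup(supp ν). -/

import Mathlib

/-!
Let `a`, `b`, `c` be the suprema of the supports of `μ`, `ν`, `η`. The convolution `μ ∗ η` puts
no mass above `a + c`, so its CDF equals `1` at `a + c`, and by dominance so does the CDF of
`ν ∗ η`. But if `a < b`, then `ν` charges `((a + b) / 2, ∞)` and `η` charges
`(c - (b - a) / 2, ∞)`, so `ν ∗ η` charges `(a + c, ∞)`, a contradiction.
-/

open MeasureTheory ProbabilityTheory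

/-- `μ` first-order stochastically dominates `ν`: the CDF of `μ` lies below that of `ν`. -/
def FSD (μ ν : Measure ℝ) : Prop := ∀ t : ℝ, cdf μ t ≤ cdf ν t

/-- The (topological) support of a measure on `ℝ`: points all of whose neighborhoods have
positive measure. -/
def msupport (μ : Measure ℝ) : Set ℝ := {x | ∀ U ∈ nhds x, μ U ≠ 0}

open Set

lemma msupport_eq_support (μ : Measure ℝ) : msupport μ = μ.support := by
  ext x
  simp [msupport, Measure.mem_support_iff_forall, pos_iff_ne_zero]

lemma measure_Ioi_sSup_msupport (μ : Measure ℝ) (hμ : BddAbove (msupport μ)) :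
    μ (Ioi (sSup (msupport μ))) = 0 := by
  have hsub : Ioi (sSup (msupport μ)) ⊆ μ.supportᶜ := fun x hx hxs =>
    not_le.mpr hx (le_csSup hμ (msupport_eq_support μ ▸ hxs))
  exact measure_mono_null hsub μ.measure_compl_support

lemma measure_Ioi_ne_zero_of_lt_sSup_msupport (μ : Measure ℝ) [NeZero μ] {u : ℝ}
    (hu : u < sSup (msupport μ)) : μ (Ioi u) ≠ 0 := by
  have hne : (msupport μ).Nonempty :=
    msupport_eq_support μ ▸ Measure.nonempty_support (NeZero.ne μ)
  obtain ⟨x, hx, hux⟩ := exists_lt_of_lt_csSup hne hu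
  exact hx (Ioi u) (isOpen_Ioi.mem_nhds hux)

lemma conv_Ioi_add_eq_zero {μ η : Measure ℝ} [SFinite η] {a c : ℝ}
    (hμ : μ (Ioi a) = 0) (hη : η (Ioi c) = 0) : (μ ∗ η) (Ioi (a + c)) = 0 := by
  rw [Measure.conv, Measure.map_apply (by fun_prop) measurableSet_Ioi]
  have hsub : (fun p : ℝ × ℝ => p.1 + p.2) ⁻¹' Ioi (a + c) ⊆ Ioi a ×ˢ univ ∪ univ ×ˢ Ioi c := by
    intro p hp
    by_contra! hout
    simp only [mem_union, mem_prod, mem_Ioi, mem_univ, and_true, true_and, not_or, not_lt]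
      at hout
    exact not_lt.mpr (add_le_add hout.1 hout.2) hp
  refine measure_mono_null hsub (measure_union_null ?_ ?_) <;> simp [Measure.prod_prod, hμ, hη]

lemma conv_Ioi_add_ne_zero {μ η : Measure ℝ} [SFinite η] {a c : ℝ}
    (hμ : μ (Ioi a) ≠ 0) (hη : η (Ioi c) ≠ 0) : (μ ∗ η) (Ioi (a + c)) ≠ 0 := by
  rw [Measure.conv, Measure.map_apply (by fun_prop) measurableSet_Ioi]
  have hsub : Ioi a ×ˢ Ioi c ⊆ (fun p : ℝ × ℝ => p.1 + p.2) ⁻¹' Ioi (a + c) :=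
    fun _ hp => by simpa using add_lt_add hp.1 hp.2
  refine fun h0 => ?_
  have := measure_mono_null hsub h0
  rw [Measure.prod_prod, mul_eq_zero] at this
  exact this.elim hμ hη

lemma cdf_eq_one_iff_measure_Ioi_eq_zero (μ : Measure ℝ) [IsProbabilityMeasure μ] (t : ℝ) :
    cdf μ t = 1 ↔ μ (Ioi t) = 0 := by
  rw [← compl_Iic, prob_compl_eq_zero_iff measurableSet_Iic, ← ofReal_cdf,
    ENNReal.ofReal_eq_one]

theorem stmt_15_general (μ ν η : Measure ℝ) [IsProbabilityMeasure μ] [IsProbabilityMeasure ν]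
    [IsProbabilityMeasure η]
    (hμ : BddAbove (msupport μ)) (hη : BddAbove (msupport η))
    (h : FSD (μ.conv η) (ν.conv η)) :
    sSup (msupport ν) ≤ sSup (msupport μ) := by
  set a := sSup (msupport μ)
  set b := sSup (msupport ν)
  set c := sSup (msupport η)
  by_contra! hab
  have hμη : cdf (μ ∗ η) (a + c) = 1 := (cdf_eq_one_iff_measure_Ioi_eq_zero _ _).2 <|
    conv_Ioi_add_eq_zero (measure_Ioi_sSup_msupport μ hμ) (measure_Ioi_sSup_msupport η hη)
  have hνη : cdf (ν ∗ η) (a + c) = 1 := le_antisymm (cdf_le_one _ _) (hμη ▸ h (a + c))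
  have hpos : (ν ∗ η) (Ioi ((a + b) / 2 + (c - (b - a) / 2))) ≠ 0 :=
    conv_Ioi_add_ne_zero (measure_Ioi_ne_zero_of_lt_sSup_msupport ν (by linarith))
      (measure_Ioi_ne_zero_of_lt_sSup_msupport η (by linarith))
  rw [show (a + b) / 2 + (c - (b - a) / 2) = a + c by ring] at hpos
  exact hpos ((cdf_eq_one_iff_measure_Ioi_eq_zero _ _).1 hνη)

theorem stmt_15 (μ ν η : Measure ℝ) [IsProbabilityMeasure μ] [IsProbabilityMeasure ν]
    [IsProbabilityMeasure η]
    (hμ : BddAbove (msupport μ)) (hν : BddAbove (msupport ν)) (hη : BddAbove (msupport η))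
    (h : FSD (μ.conv η) (ν.conv η)) :
    sSup (msupport ν) ≤ sSup (msupport μ) :=
  stmt_15_general μ ν η hμ hη h
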